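/- arXiv:2407.04584 — 4 statements merged into one kernel-verified Lean document; each statement's English description precedes it below -/
import Mathlib

section
/- For every integer k ≥ 0 and all real v with k ≤ v ≤ k+1, the Dickman function satisfies ϱ(v) ≤ 1/k!. -/
open Set MeasureTheory intervalIntegral Filter Topology

section Aux

variable {ϱ : ℝ → ℝ}

lemma dickman_intble (hcont : ContinuousOn ϱ (Set.Ici 0)) {a b : ℝ} (ha : 0 ≤ a) (hb : 0 ≤ b) :
    IntervalIntegrable ϱ volume a b := by
  apply (hcont.mono ?_).intervalIntegrable
  intro x hx
  rcases le_total a b with h | h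
  · rw [uIcc_of_le h] at hx; exact le_trans ha hx.1
  · rw [uIcc_of_ge h] at hx; exact le_trans hb hx.1

lemma dickman_key (hcont : ContinuousOn ϱ (Set.Ici 0))
    (hinit : ∀ v : ℝ, 0 ≤ v → v ≤ 1 → ϱ v = 1)
    (hode : ∀ v : ℝ, 1 < v → ∃ d : ℝ, HasDerivAt ϱ d v ∧ v * d + ϱ (v - 1) = 0) :
    ∀ v : ℝ, 1 ≤ v → v * ϱ v = ∫ t in (v-1)..v, ϱ t := by
  set G : ℝ → ℝ := fun x => ∫ t in (0:ℝ)..x, ϱ t with hG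
  have hGd : ∀ x : ℝ, 0 < x → HasDerivAt G (ϱ x) x := by
    intro x hx
    have hca : ContinuousAt ϱ x :=
      (hcont x (le_of_lt hx)).continuousAt (Ici_mem_nhds hx)
    exact integral_hasDerivAt_right (dickman_intble hcont le_rfl hx.le)
      (ContinuousOn.stronglyMeasurableAtFilter isOpen_Ioi
        (hcont.mono (Ioi_subset_Ici le_rfl)) x hx) hca
  set F : ℝ → ℝ := fun v => v * ϱ v - (G v - G (v-1)) with hF
  have hF' : ∀ v : ℝ, 1 < v → HasDerivAt F 0 v := by
    intro v hv
    obtain ⟨d, hd, heq⟩ := hode v hv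
    have h1 : HasDerivAt (fun v : ℝ => v * ϱ v) (1 * ϱ v + v * d) v :=
      (hasDerivAt_id v).mul hd
    have h2 : HasDerivAt (fun v : ℝ => G (v - 1)) (ϱ (v-1) * 1) v :=
      by have := (hGd (v-1) (by linarith)).comp v ((hasDerivAt_id' v).sub_const 1); exact this
    have h3 : HasDerivAt F (1 * ϱ v + v * d - (ϱ v - ϱ (v-1) * 1)) v :=
      h1.sub ((hGd v (by linarith)).sub h2)
    convert h3 using 1
    linarith
  have hsplit : ∀ v : ℝ, 1 ≤ v → G v - G (v-1) = ∫ t in (v-1)..v, ϱ t := by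
    intro v hv
    have := integral_add_adjacent_intervals
      (dickman_intble hcont le_rfl (by linarith : (0:ℝ) ≤ v - 1))
      (dickman_intble hcont (by linarith : (0:ℝ) ≤ v - 1) (by linarith : (0:ℝ) ≤ v))
    simp only [hG]
    linarith [this]
  have hG1 : G 1 = 1 := by
    have : (∫ t in (0:ℝ)..1, ϱ t) = ∫ t in (0:ℝ)..1, (1:ℝ) := by
      apply integral_congr
      intro x hx
      rw [uIcc_of_le zero_le_one] at hx
      exact hinit x hx.1 hx.2
    simp [hG, this]
  have hF1 : F 1 = 0 := by
    have hG0 : G 0 = 0 := by simp [hG]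
    simp only [hF]
    rw [hinit 1 zero_le_one le_rfl]
    norm_num [hG1, hG0]
  intro v hv
  rcases eq_or_lt_of_le hv with h1 | h1
  · rw [← hsplit v hv]
    have : F v = 0 := by rw [← h1]; exact hF1
    simp only [hF] at this
    linarith
  -- v > 1 : show F v = 0
  have hconst : ∀ a : ℝ, 1 < a → a ≤ v → F v = F a := by
    intro a ha hav
    have hc : ContinuousOn F (Icc a v) := fun x hx =>
      ((hF' x (lt_of_lt_of_le ha hx.1)).continuousAt).continuousWithinAt
    exact constant_of_has_deriv_right_zero hc
      (fun x hx => ((hF' x (lt_of_lt_of_le ha hx.1)).hasDerivWithinAt))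
      v ⟨hav, le_rfl⟩
  have hGcont : ContinuousOn G (Icc 0 v) := by
    have hint : IntegrableOn ϱ (uIcc 0 v) volume := by
      rw [uIcc_of_le (by linarith : (0:ℝ) ≤ v)]
      exact (hcont.mono (Icc_subset_Ici_self)).integrableOn_Icc
    have := continuousOn_primitive_interval (f := ϱ) (μ := volume) (a := 0) (b := v) hint
    rwa [uIcc_of_le (by linarith : (0:ℝ) ≤ v)] at this
  have hFc : ContinuousOn F (Icc 1 v) := by
    have c1 : ContinuousOn (fun x : ℝ => x * ϱ x) (Icc 1 v) :=
      continuousOn_id.mul (hcont.mono (fun x hx => le_trans zero_le_one hx.1))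
    have c2 : ContinuousOn (fun x : ℝ => G (x - 1)) (Icc 1 v) := by
      apply hGcont.comp (continuousOn_id.sub continuousOn_const)
      intro x hx
      show x - 1 ∈ Icc 0 v
      exact ⟨by linarith [hx.1], by linarith [hx.2]⟩
    exact c1.sub ((hGcont.mono (fun x hx => ⟨by linarith [hx.1], hx.2⟩)).sub c2)
  have hFv : F v = F 1 := by
    have hne : (𝓝[Ioc 1 v] (1:ℝ)).NeBot := left_nhdsWithin_Ioc_neBot h1
    have t1 : Tendsto F (𝓝[Ioc 1 v] (1:ℝ)) (𝓝 (F 1)) := by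
      apply (hFc 1 ⟨le_rfl, hv⟩).mono_left
      exact nhdsWithin_mono 1 Ioc_subset_Icc_self
    have t2 : Tendsto F (𝓝[Ioc 1 v] (1:ℝ)) (𝓝 (F v)) := by
      apply Tendsto.congr' _ tendsto_const_nhds
      filter_upwards [self_mem_nhdsWithin] with a ha
      exact hconst a ha.1 ha.2
    exact tendsto_nhds_unique t2 t1
  rw [← hsplit v hv]
  have : F v = 0 := by rw [hFv]; exact hF1
  simp only [hF] at this
  linarith

lemma dickman_pos (hcont : ContinuousOn ϱ (Set.Ici 0))
    (hinit : ∀ v : ℝ, 0 ≤ v → v ≤ 1 → ϱ v = 1)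
    (hode : ∀ v : ℝ, 1 < v → ∃ d : ℝ, HasDerivAt ϱ d v ∧ v * d + ϱ (v - 1) = 0) :
    ∀ v : ℝ, 0 ≤ v → 0 < ϱ v := by
  by_contra hcon
  push_neg at hcon
  obtain ⟨u, hu0, hu⟩ := hcon
  set S : Set ℝ := Ici 0 ∩ ϱ ⁻¹' (Iic 0) with hS
  have hSclosed : IsClosed S := hcont.preimage_isClosed_of_isClosed isClosed_Ici isClosed_Iic
  have hSne : S.Nonempty := ⟨u, hu0, hu⟩
  have hSbdd : BddBelow S := ⟨0, fun x hx => hx.1⟩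
  set w := sInf S with hw
  have hwS : w ∈ S := hSclosed.csInf_mem hSne hSbdd
  have hw0 : 0 ≤ w := hwS.1
  have hwneg : ϱ w ≤ 0 := hwS.2
  have hw1 : 1 < w := by
    by_contra h
    push_neg at h
    rw [hinit w hw0 h] at hwneg
    linarith
  have hbelow : ∀ t : ℝ, 0 ≤ t → t < w → 0 < ϱ t := by
    intro t ht0 htw
    by_contra h
    push_neg at h
    exact absurd (csInf_le hSbdd ⟨ht0, h⟩) (not_le.mpr htw)
  have hkey := dickman_key hcont hinit hode w hw1.le
  have hpos : 0 < ∫ t in (w-1)..w, ϱ t := by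
    apply intervalIntegral_pos_of_pos_on
      (dickman_intble hcont (by linarith) (by linarith)) _ (by linarith)
    intro x hx
    exact hbelow x (by linarith [hx.1]) hx.2
  nlinarith
lemma dickman_mono (hcont : ContinuousOn ϱ (Set.Ici 0))
    (hinit : ∀ v : ℝ, 0 ≤ v → v ≤ 1 → ϱ v = 1)
    (hode : ∀ v : ℝ, 1 < v → ∃ d : ℝ, HasDerivAt ϱ d v ∧ v * d + ϱ (v - 1) = 0) :
    ∀ a b : ℝ, 0 ≤ a → a ≤ b → ϱ b ≤ ϱ a := by
  have hanti : AntitoneOn ϱ (Ici 1) := by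
    apply antitoneOn_of_deriv_nonpos (convex_Ici 1)
      (hcont.mono (Ici_subset_Ici.mpr zero_le_one))
    · intro x hx
      rw [interior_Ici] at hx
      obtain ⟨d, hd, _⟩ := hode x hx
      exact hd.differentiableAt.differentiableWithinAt
    · intro x hx
      rw [interior_Ici] at hx
      obtain ⟨d, hd, heq⟩ := hode x hx
      have hx1 : 1 < x := hx
      rw [hd.deriv]
      have hp : 0 < ϱ (x - 1) := dickman_pos hcont hinit hode (x - 1) (by linarith)
      have hx0 : (0:ℝ) < x := lt_trans one_pos hx
      nlinarith
  intro a b ha hab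
  rcases le_total b 1 with hb | hb
  · rw [hinit a ha (le_trans hab hb), hinit b (le_trans ha hab) hb]
  · rcases le_total 1 a with ha1 | ha1
    · exact hanti ha1 (le_trans ha1 hab) hab
    · rw [hinit a ha ha1]
      calc ϱ b ≤ ϱ 1 := hanti (le_refl (1:ℝ)) hb hb
        _ = 1 := hinit 1 zero_le_one le_rfl

end Aux

theorem dickman_factorial_bound
    (ϱ : ℝ → ℝ)
    (hcont : ContinuousOn ϱ (Set.Ici 0))
    (hinit : ∀ v : ℝ, 0 ≤ v → v ≤ 1 → ϱ v = 1)
    (hode : ∀ v : ℝ, 1 < v → ∃ d : ℝ, HasDerivAt ϱ d v ∧ v * d + ϱ (v - 1) = 0) :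
    ∀ k : ℕ, ∀ v : ℝ, (k : ℝ) ≤ v → v ≤ (k : ℝ) + 1 → ϱ v ≤ 1 / (Nat.factorial k : ℝ) := by
  intro k
  induction k with
  | zero =>
    intro v hv1 hv2
    simp only [Nat.cast_zero, zero_add] at hv1 hv2 ⊢
    rw [hinit v hv1 hv2, Nat.factorial_zero]
    norm_num
  | succ k ih =>
    intro v hv1 hv2
    have hk1 : ((k:ℝ) + 1) ≤ v := by push_cast at hv1; linarith
    have hv : (1:ℝ) ≤ v := by
      have : (0:ℝ) ≤ (k:ℝ) := Nat.cast_nonneg k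
      linarith
    have hIH : ϱ (v - 1) ≤ 1 / (Nat.factorial k : ℝ) := by
      apply ih (v - 1) (by linarith) (by push_cast at hv2 ⊢; linarith)
    have hkey := dickman_key hcont hinit hode v hv
    have hle : (∫ t in (v-1)..v, ϱ t) ≤ ∫ t in (v-1)..v, ϱ (v-1) := by
      apply integral_mono_on (by linarith)
        (dickman_intble hcont (by linarith) (by linarith)) intervalIntegrable_const
      intro t ht
      exact dickman_mono hcont hinit hode (v-1) t (by linarith) ht.1
    rw [intervalIntegral.integral_const] at hle
    have h2 : v * ϱ v ≤ ϱ (v - 1) := by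
      rw [hkey]
      have : (v - (v - 1)) = 1 := by ring
      rw [this] at hle
      simpa using hle
    have hpos : 0 < ϱ v := dickman_pos hcont hinit hode v (by linarith)
    have hfpos : 0 < (Nat.factorial k : ℝ) := by
      exact_mod_cast Nat.factorial_pos k
    rw [Nat.factorial_succ, Nat.cast_mul, Nat.cast_add, Nat.cast_one,
      le_div_iff₀ (by positivity)]
    nlinarith [mul_le_mul_of_nonneg_right h2 hfpos.le,
      mul_le_mul_of_nonneg_right hIH hfpos.le, one_div_mul_cancel hfpos.ne',
      mul_nonneg (mul_nonneg (by linarith : (0:ℝ) ≤ v - ((k:ℝ)+1)) hpos.le) hfpos.le]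
end

section
/- For v ≥ 3, the function ξ(v) defined by e^{ξ(v)} = 1 + v·ξ(v), ξ(v) > 0, satisfies ξ(v) ≤ 2·log(v·log v), and ξ(v) ≥ log(v·log v) − 1 for all sufficiently large v. -/
open Real

lemma exp_convex_aux {a b : ℝ} (h0 : 0 ≤ a) (hab : a ≤ b) (hb : 0 < b) :
    Real.exp a ≤ (1 - a / b) + (a / b) * Real.exp b := by
  have hw1 : (0:ℝ) ≤ 1 - a / b := by
    have : a / b ≤ 1 := (div_le_one hb).2 hab
    linarith
  have hw2 : (0:ℝ) ≤ a / b := div_nonneg h0 hb.le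
  have hsum : (1 - a / b) + a / b = 1 := by ring
  have h := convexOn_exp.2 (Set.mem_univ (0:ℝ)) (Set.mem_univ b) hw1 hw2 hsum
  have hab' : a / b * b = a := div_mul_cancel₀ a hb.ne'
  simpa [smul_eq_mul, hab'] using h

lemma log_three_gt : (1.09 : ℝ) < Real.log 3 := by
  have h2 := Real.log_two_gt_d9
  have hpow : Real.log ((2:ℝ)^19) < Real.log ((3:ℝ)^12) :=
    Real.log_lt_log (by positivity) (by norm_num)
  rw [Real.log_pow, Real.log_pow] at hpow
  push_cast at hpow
  nlinarith

theorem xi_log_bounds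
    (ξ : ℝ → ℝ)
    (hξ : ∀ v : ℝ, 1 < v → 0 < ξ v ∧ Real.exp (ξ v) = 1 + v * ξ v) :
    (∀ v : ℝ, 3 ≤ v → ξ v ≤ 2 * Real.log (v * Real.log v)) ∧
    (∃ V : ℝ, ∀ v : ℝ, V ≤ v → Real.log (v * Real.log v) - 1 ≤ ξ v) := by
  constructor
  · intro v hv
    have hv1 : (1:ℝ) < v := by linarith
    obtain ⟨hpos, heq⟩ := hξ v hv1
    have ht : (1.09 : ℝ) < Real.log v :=
      lt_of_lt_of_le log_three_gt (Real.log_le_log (by norm_num) hv)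
    set t := Real.log v with htdef
    have hX : (0:ℝ) < v * t := by nlinarith
    set L := Real.log (v * t) with hLdef
    have hexpL : Real.exp L = v * t := Real.exp_log hX
    have hlog_le : L ≤ 1 + (v * t) / Real.exp 2 := by
      have hp : (0:ℝ) < v * t / Real.exp 2 := by positivity
      have h1 := Real.log_le_sub_one_of_pos hp
      rw [Real.log_div hX.ne' (Real.exp_pos 2).ne', Real.log_exp] at h1
      linarith
    have he2 : (7.38:ℝ) < Real.exp 2 := by
      have h := Real.exp_one_gt_d9
      have h2 : Real.exp 2 = Real.exp 1 * Real.exp 1 := by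
        rw [← Real.exp_add]; norm_num
      nlinarith
    have hdiv : (v * t) / Real.exp 2 ≤ (v * t) / 7.38 :=
      div_le_div_of_nonneg_left hX.le (by norm_num) he2.le
    have hkey : 1 + 2 * v * L < (v * t) ^ 2 := by
      have hle : L ≤ 1 + (v * t) / 7.38 := le_trans hlog_le (by linarith)
      have hv0 : (0:ℝ) < v := by linarith
      have hA : (0.8189:ℝ) ≤ t - 0.2711 := by linarith
      have hvt : (3.27:ℝ) ≤ v * t := by nlinarith
      have f1 : 2 * v * L ≤ 2 * v * (1 + v * t / 7.38) :=
        mul_le_mul_of_nonneg_left hle (by linarith)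
      have f2 : v * v * t * 0.8189 ≤ v * v * t * (t - 0.2711) :=
        mul_le_mul_of_nonneg_left hA (by positivity)
      have f3 : v * 3.27 ≤ v * (v * t) :=
        mul_le_mul_of_nonneg_left hvt hv0.le
      ring_nf at f1 f2 f3 ⊢
      by_contra hcon
      push_neg at hcon
      linarith
    have hL0 : 0 < L := Real.log_pos (by nlinarith)
    by_contra hcon
    push_neg at hcon
    have hcv := exp_convex_aux (by positivity : (0:ℝ) ≤ 2 * L) hcon.le hpos
    rw [heq] at hcv
    have hexp2L : Real.exp (2 * L) = (v * t) ^ 2 := by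
      rw [two_mul, Real.exp_add, hexpL]; ring
    rw [hexp2L] at hcv
    have hfrac : 2 * L / ξ v * (1 + v * ξ v) = 2 * L / ξ v + 2 * v * L := by
      field_simp
    rw [hfrac] at hcv
    linarith
  · refine ⟨16, fun v hv => ?_⟩
    have hv1 : (1:ℝ) < v := by linarith
    obtain ⟨hpos, heq⟩ := hξ v hv1
    have hlog16 : (2.77:ℝ) < Real.log 16 := by
      have h2 := Real.log_two_gt_d9
      have h16 : Real.log (16:ℝ) = 4 * Real.log 2 := by
        rw [show (16:ℝ) = 2^4 by norm_num, Real.log_pow]; push_cast; ring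
      nlinarith
    have ht : (2.77:ℝ) < Real.log v :=
      lt_of_lt_of_le hlog16 (Real.log_le_log (by norm_num) hv)
    set t := Real.log v with htdef
    have htpos : (0:ℝ) < t := by linarith
    have hX : (0:ℝ) < v * t := by positivity
    set L := Real.log (v * t) with hLdef
    have hLsplit : L = t + Real.log t := Real.log_mul (by linarith) htpos.ne'
    have hloglog : 1 < Real.log t := by
      have he : Real.exp 1 < t := by
        have := Real.exp_one_lt_d9
        linarith
      calc (1:ℝ) = Real.log (Real.exp 1) := (Real.log_exp 1).symm
        _ < Real.log t := Real.log_lt_log (Real.exp_pos 1) he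
    have ha : t < L - 1 := by linarith
    set a := L - 1 with hadef
    have ha0 : 0 < a := by linarith
    have hexpa : Real.exp a = v * t / Real.exp 1 := by
      rw [hadef, Real.exp_sub, Real.exp_log hX]
    have hkey : Real.exp a < 1 + v * a := by
      rw [hexpa]
      have h1 : v * t / Real.exp 1 < v * t := by
        have := Real.exp_one_gt_d9
        rw [div_lt_iff₀ (Real.exp_pos 1)]
        nlinarith
      nlinarith
    by_contra hcon
    push_neg at hcon
    have hcv := exp_convex_aux hpos.le hcon.le ha0
    rw [heq] at hcv
    have hfr : 0 < ξ v / a := div_pos hpos ha0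
    have hmul : ξ v / a * Real.exp a < ξ v / a * (1 + v * a) :=
      mul_lt_mul_of_pos_left hkey hfr
    have hfin : ξ v / a * (1 + v * a) = ξ v / a + v * ξ v := by
      field_simp
    rw [hfin] at hmul
    linarith
end

section
/- The series ∑_{n≥1} 1/(n·ψ(n)) converges, where ψ(n) := ∏_{p | n, p prime}(p+1). -/
/-- `ψ(n) = ∏_{p prime, p ∣ n} (p + 1)`. -/
def psiFun (n : ℕ) : ℕ := ∏ p ∈ n.primeFactors, (p + 1)

noncomputable def sqDec (n : ℕ) : ℕ × ℕ :=
  ⟨(Nat.sq_mul_squarefree n).choose, (Nat.sq_mul_squarefree n).choose_spec.choose⟩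

lemma sqDec_spec (n : ℕ) :
    (sqDec n).2 ^ 2 * (sqDec n).1 = n ∧ Squarefree (sqDec n).1 :=
  (Nat.sq_mul_squarefree n).choose_spec.choose_spec

lemma sqfree_le_psi {a m : ℕ} (ha : Squarefree a) (hd : a ∣ m) (hm : m ≠ 0) :
    a ≤ psiFun m := by
  have h1 : a = ∏ p ∈ a.primeFactors, p := (Nat.prod_primeFactors_of_squarefree ha).symm
  rw [h1, psiFun]
  calc ∏ p ∈ a.primeFactors, p
      ≤ ∏ p ∈ m.primeFactors, p :=
        Finset.prod_le_prod_of_subset_of_one_le' (Nat.primeFactors_mono hd hm)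
          (fun p hp _ => (Nat.prime_of_mem_primeFactors hp).one_lt.le)
    _ ≤ ∏ p ∈ m.primeFactors, (p + 1) :=
        Finset.prod_le_prod' (fun p _ => Nat.le_succ p)

set_option maxHeartbeats 1000000 in
theorem summable_one_div_n_psi :
    Summable (fun n : ℕ => 1 / ((n + 1 : ℝ) * (psiFun (n + 1) : ℝ))) := by
  have hf : Summable (fun n : ℕ => 1 / ((n : ℝ) + 1) ^ 2) := by
    have := (summable_nat_add_iff (f := fun n : ℕ => 1 / (n : ℝ) ^ 2) 1).2
      (Real.summable_one_div_nat_pow.2 one_lt_two)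
    simpa using this
  have hg : Summable (fun p : ℕ × ℕ =>
      (1 / ((p.1 : ℝ) + 1) ^ 2) * (1 / ((p.2 : ℝ) + 1) ^ 2)) :=
    hf.mul_of_nonneg hf (fun n => by positivity) (fun n => by positivity)
  set g : ℕ × ℕ → ℝ := fun p => (1 / ((p.1 : ℝ) + 1) ^ 2) * (1 / ((p.2 : ℝ) + 1) ^ 2) with hgdef
  apply summable_of_sum_range_le (c := ∑' p, g p)
  · intro n
    positivity
  · intro N
    -- index map
    set i : ℕ → ℕ × ℕ := fun n => ((sqDec (n + 1)).1 - 1, (sqDec (n + 1)).2 - 1) with hidef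
    have hpos : ∀ n : ℕ, 1 ≤ (sqDec (n + 1)).1 ∧ 1 ≤ (sqDec (n + 1)).2 := by
      intro n
      obtain ⟨heq, _⟩ := sqDec_spec (n + 1)
      constructor
      · rcases Nat.eq_zero_or_pos (sqDec (n + 1)).1 with h | h
        · simp [h] at heq
        · exact h
      · rcases Nat.eq_zero_or_pos (sqDec (n + 1)).2 with h | h
        · simp [h] at heq
        · exact h
    have hinj : Set.InjOn i (Finset.range N) := by
      intro n _ m _ h
      obtain ⟨hn, _⟩ := sqDec_spec (n + 1)
      obtain ⟨hm, _⟩ := sqDec_spec (m + 1)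
      have h1 := congrArg Prod.fst h
      have h2 := congrArg Prod.snd h
      simp only [hidef] at h1 h2
      have e1 : (sqDec (n + 1)).1 = (sqDec (m + 1)).1 := by
        have := (hpos n).1; have := (hpos m).1; omega
      have e2 : (sqDec (n + 1)).2 = (sqDec (m + 1)).2 := by
        have := (hpos n).2; have := (hpos m).2; omega
      have : n + 1 = m + 1 := by rw [← hn, ← hm, e1, e2]
      omega
    have hle : ∀ n ∈ Finset.range N,
        1 / ((n + 1 : ℝ) * (psiFun (n + 1) : ℝ)) ≤ g (i n) := by
      intro n _
      obtain ⟨heq, hsf⟩ := sqDec_spec (n + 1)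
      obtain ⟨ha1, hb1⟩ := hpos n
      set a := (sqDec (n + 1)).1
      set b := (sqDec (n + 1)).2
      have hgi : g (i n) = 1 / ((a : ℝ) ^ 2 * (b : ℝ) ^ 2) := by
        simp only [hgdef, hidef]
        rw [Nat.cast_sub ha1, Nat.cast_sub hb1]
        push_cast
        ring
      rw [hgi]
      have hdvd : a ∣ n + 1 := ⟨b ^ 2, by rw [← heq]; ring⟩
      have hpsi : a ≤ psiFun (n + 1) := sqfree_le_psi hsf hdvd (Nat.succ_ne_zero n)
      have hnat : a ^ 2 * b ^ 2 ≤ (n + 1) * psiFun (n + 1) := by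
        calc a ^ 2 * b ^ 2 = (b ^ 2 * a) * a := by ring
          _ ≤ (b ^ 2 * a) * psiFun (n + 1) := Nat.mul_le_mul_left _ hpsi
          _ = (n + 1) * psiFun (n + 1) := by rw [heq]
      have hposR : (0 : ℝ) < (a : ℝ) ^ 2 * (b : ℝ) ^ 2 := by positivity
      apply one_div_le_one_div_of_le hposR
      calc ((a : ℝ) ^ 2 * (b : ℝ) ^ 2) = ((a ^ 2 * b ^ 2 : ℕ) : ℝ) := by push_cast; ring
        _ ≤ (((n + 1) * psiFun (n + 1) : ℕ) : ℝ) := by exact_mod_cast hnat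
        _ = (n + 1 : ℝ) * (psiFun (n + 1) : ℝ) := by push_cast; ring
    calc ∑ n ∈ Finset.range N, 1 / ((n + 1 : ℝ) * (psiFun (n + 1) : ℝ))
        ≤ ∑ n ∈ Finset.range N, g (i n) := Finset.sum_le_sum hle
      _ = ∑ p ∈ (Finset.range N).image i, g p :=
          (Finset.sum_image (fun x hx y hy h => hinj hx hy h)).symm
      _ ≤ ∑' p, g p := Summable.sum_le_tsum _ (fun p _ => by positivity) hg
end

section
/- With x_k := x·e^{−kε}, y_k := x_k^{1/u} for a fixed u ≥ 1 and ε > 0, and any integer K ≥ 1 with x_K ≥ 1, the sandwich inequalities hold: ∑_{k<K} {Ψ(x_k, y_{k+1}) − Ψ(x_{k+1}, y_{k+1})} ≤ D(x,u) ≤ ∑_{k<K} {Ψ(x_k, y_k) − Ψ(x_{k+1}, y_k)} + Ψ(x_K, y_K), where Ψ(x,y) = #{n ≤ x : P⁺(n) ≤ y} and D(x,u) = #{n ≤ x : P⁺(n) ≤ n^{1/u}}. -/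
/-- `P⁺(n)`: the largest prime factor of `n`, with `P⁺(1) = 1`. -/
def Pplus (n : ℕ) : ℕ := max 1 (n.primeFactors.sup id)

/-- `Ψ(x, y) = #{n ≤ x : P⁺(n) ≤ y}`. -/
noncomputable def Psi (x y : ℝ) : ℕ :=
  ((Finset.Icc 1 ⌊x⌋₊).filter (fun n => (Pplus n : ℝ) ≤ y)).card

/-- `D(x, u) = #{n ≤ x : P⁺(n) ≤ n^{1/u}}`. -/
noncomputable def Dfun (x u : ℝ) : ℕ :=
  ((Finset.Icc 1 ⌊x⌋₊).filter (fun n => (Pplus n : ℝ) ≤ (n : ℝ) ^ (1 / u))).card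

theorem D_sandwich (x u ε : ℝ) (K : ℕ) (hu : 1 ≤ u) (hε : 0 < ε) (hK : 1 ≤ K)
    (xk : ℕ → ℝ) (yk : ℕ → ℝ)
    (hxk : ∀ k : ℕ, xk k = x * Real.exp (-(k : ℝ) * ε))
    (hyk : ∀ k : ℕ, yk k = (xk k) ^ (1 / u))
    (hxK : 1 ≤ xk K) :
    (∑ k ∈ Finset.range K,
        ((Psi (xk k) (yk (k + 1)) : ℝ) - (Psi (xk (k + 1)) (yk (k + 1)) : ℝ)))
      ≤ (Dfun x u : ℝ) ∧
    (Dfun x u : ℝ) ≤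
      (∑ k ∈ Finset.range K,
        ((Psi (xk k) (yk k) : ℝ) - (Psi (xk (k + 1)) (yk k) : ℝ))) + (Psi (xk K) (yk K) : ℝ) := by
  classical
  have hupos : 0 < u := lt_of_lt_of_le one_pos hu
  have hinv : 0 ≤ 1 / u := by positivity
  have hxpos : 0 < x := by
    have h := hxK
    rw [hxk] at h
    nlinarith [Real.exp_pos (-(K : ℝ) * ε)]
  have hkpos : ∀ k, 0 < xk k := by
    intro k; rw [hxk]; positivity
  have hx0 : xk 0 = x := by rw [hxk]; simp
  have hanti : ∀ k, xk (k + 1) ≤ xk k := by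
    intro k
    rw [hxk, hxk]
    refine mul_le_mul_of_nonneg_left (Real.exp_le_exp.2 ?_) hxpos.le
    push_cast
    nlinarith
  set N : ℕ → ℕ := fun k => ⌊xk k⌋₊ with hN
  have hN0 : N 0 = ⌊x⌋₊ := by show ⌊xk 0⌋₊ = ⌊x⌋₊; rw [hx0]
  have hNanti : ∀ k, N (k + 1) ≤ N k := fun k => Nat.floor_le_floor (hanti k)
  have hNanti' : ∀ j k, j ≤ k → N k ≤ N j := by
    intro j k h
    induction h with
    | refl => exact le_rfl
    | step h ih => exact le_trans (hNanti _) ih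
  -- basic: n ≤ N k implies (n:ℝ) ≤ xk k ; N k < n implies xk k < n
  have hle : ∀ (n k : ℕ), n ≤ N k → (n : ℝ) ≤ xk k := by
    intro n k h
    exact le_trans (Nat.cast_le.2 h) (Nat.floor_le (hkpos k).le)
  have hlt : ∀ (n k : ℕ), N k < n → xk k < (n : ℝ) := by
    intro n k h
    exact (Nat.floor_lt (hkpos k).le).1 h
  -- Ψ-difference as a count over an interval
  have hsplit : ∀ (k : ℕ) (y : ℝ), (Psi (xk k) y : ℝ) - (Psi (xk (k + 1)) y : ℝ)
      = (((Finset.Ioc (N (k + 1)) (N k)).filter (fun n => (Pplus n : ℝ) ≤ y)).card : ℝ) := by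
    intro k y
    have hIcc : Finset.Icc 1 (N k) = Finset.Icc 1 (N (k + 1)) ∪ Finset.Ioc (N (k + 1)) (N k) := by
      rw [show (1 : ℕ) = 0 + 1 from rfl, Finset.Icc_add_one_left_eq_Ioc, Finset.Icc_add_one_left_eq_Ioc,
        Finset.Ioc_union_Ioc_eq_Ioc (Nat.zero_le _) (hNanti k)]
    have hdisj : Disjoint
        ((Finset.Icc 1 (N (k + 1))).filter (fun n => (Pplus n : ℝ) ≤ y))
        ((Finset.Ioc (N (k + 1)) (N k)).filter (fun n => (Pplus n : ℝ) ≤ y)) := by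
      refine Finset.disjoint_filter_filter ?_
      rw [Finset.disjoint_left]
      intro n hn hn'
      simp only [Finset.mem_Icc, Finset.mem_Ioc] at hn hn'
      omega
    have heq : Psi (xk k) y = Psi (xk (k + 1)) y
        + ((Finset.Ioc (N (k + 1)) (N k)).filter (fun n => (Pplus n : ℝ) ≤ y)).card := by
      unfold Psi
      rw [show ⌊xk k⌋₊ = N k from rfl, show ⌊xk (k + 1)⌋₊ = N (k + 1) from rfl,
        hIcc, Finset.filter_union, Finset.card_union_of_disjoint hdisj]
    rw [heq]
    push_cast
    ring
  constructor
  · -- lower bound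
    have hterm : ∀ k, ((Finset.Ioc (N (k + 1)) (N k)).filter
          (fun n => (Pplus n : ℝ) ≤ yk (k + 1)))
        ⊆ ((Finset.Ioc (N (k + 1)) (N k)).filter
          (fun n => (Pplus n : ℝ) ≤ (n : ℝ) ^ (1 / u))) := by
      intro k n hn
      simp only [Finset.mem_filter, Finset.mem_Ioc] at hn ⊢
      refine ⟨hn.1, le_trans hn.2 ?_⟩
      rw [hyk]
      exact Real.rpow_le_rpow (hkpos (k + 1)).le (hlt n (k + 1) hn.1.1).le hinv
    -- the bigger sets are pairwise disjoint
    set g : ℕ → Finset ℕ := fun k => (Finset.Ioc (N (k + 1)) (N k)).filter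
        (fun n => (Pplus n : ℝ) ≤ (n : ℝ) ^ (1 / u)) with hg
    have hdisjg : ∀ a ∈ Finset.range K, ∀ b ∈ Finset.range K, a ≠ b → Disjoint (g a) (g b) := by
      have key : ∀ a b : ℕ, a < b → Disjoint (g a) (g b) := by
        intro a b hab
        rw [Finset.disjoint_left]
        intro n hna hnb
        simp only [hg, Finset.mem_filter, Finset.mem_Ioc] at hna hnb
        have : N b ≤ N (a + 1) := hNanti' (a + 1) b hab
        omega
      intro a _ b _ hab
      rcases lt_or_gt_of_ne hab with h | h
      · exact key a b h
      · exact (key b a h).symm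
    have hsum : ∑ k ∈ Finset.range K,
        ((Psi (xk k) (yk (k + 1)) : ℝ) - (Psi (xk (k + 1)) (yk (k + 1)) : ℝ))
        = ((∑ k ∈ Finset.range K, (((Finset.Ioc (N (k + 1)) (N k)).filter
            (fun n => (Pplus n : ℝ) ≤ yk (k + 1))).card)) : ℕ) := by
      push_cast
      exact Finset.sum_congr rfl fun k _ => hsplit k (yk (k + 1))
    rw [hsum]
    have hcard : (∑ k ∈ Finset.range K, (((Finset.Ioc (N (k + 1)) (N k)).filter
          (fun n => (Pplus n : ℝ) ≤ yk (k + 1))).card)) ≤ Dfun x u := by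
      calc (∑ k ∈ Finset.range K, (((Finset.Ioc (N (k + 1)) (N k)).filter
            (fun n => (Pplus n : ℝ) ≤ yk (k + 1))).card))
          ≤ ∑ k ∈ Finset.range K, (g k).card :=
            Finset.sum_le_sum fun k _ => Finset.card_le_card (hterm k)
        _ = ((Finset.range K).biUnion g).card := (Finset.card_biUnion hdisjg).symm
        _ ≤ Dfun x u := by
            apply Finset.card_le_card
            intro n hn
            simp only [Finset.mem_biUnion, Finset.mem_range, hg, Finset.mem_filter,
              Finset.mem_Ioc] at hn
            obtain ⟨k, hkK, ⟨hn1, hn2⟩, hP⟩ := hn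
            simp only [Finset.mem_filter, Finset.mem_Icc]
            refine ⟨⟨by omega, ?_⟩, hP⟩
            have : N k ≤ N 0 := hNanti' 0 k (Nat.zero_le k)
            have : n ≤ N 0 := le_trans hn2 this
            rwa [hN0] at this
    exact_mod_cast hcard
  · -- upper bound
    -- cover Icc 1 (N 0) by Icc 1 (N K) and the Ioc intervals
    have hcover : ∀ m n : ℕ, N m < n → n ≤ N 0 → ∃ k < m, N (k + 1) < n ∧ n ≤ N k := by
      intro m
      induction m with
      | zero => intro n h1 h2; omega
      | succ m ih =>
          intro n h1 h2
          by_cases h : n ≤ N m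
          · exact ⟨m, Nat.lt_succ_self m, h1, h⟩
          · obtain ⟨k, hk, hk1, hk2⟩ := ih n (by omega) h2
            exact ⟨k, by omega, hk1, hk2⟩
    have hDsub : ((Finset.Icc 1 ⌊x⌋₊).filter (fun n => (Pplus n : ℝ) ≤ (n : ℝ) ^ (1 / u)))
        ⊆ ((Finset.Icc 1 (N K)).filter (fun n => (Pplus n : ℝ) ≤ yk K))
          ∪ (Finset.range K).biUnion (fun k => (Finset.Ioc (N (k + 1)) (N k)).filter
              (fun n => (Pplus n : ℝ) ≤ yk k)) := by
      intro n hn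
      simp only [Finset.mem_filter, Finset.mem_Icc] at hn
      obtain ⟨⟨hn1, hn2⟩, hP⟩ := hn
      have hn2' : n ≤ N 0 := by rw [hN0]; exact hn2
      simp only [Finset.mem_union, Finset.mem_filter, Finset.mem_Icc, Finset.mem_biUnion,
        Finset.mem_range, Finset.mem_Ioc]
      by_cases h : n ≤ N K
      · left
        refine ⟨⟨hn1, h⟩, le_trans hP ?_⟩
        rw [hyk]
        exact Real.rpow_le_rpow (Nat.cast_nonneg n) (hle n K h) hinv
      · right
        obtain ⟨k, hkK, hk1, hk2⟩ := hcover K n (by omega) hn2'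
        refine ⟨k, hkK, ⟨hk1, hk2⟩, le_trans hP ?_⟩
        rw [hyk]
        exact Real.rpow_le_rpow (Nat.cast_nonneg n) (hle n k hk2) hinv
    have hcard : Dfun x u ≤ (∑ k ∈ Finset.range K, ((Finset.Ioc (N (k + 1)) (N k)).filter
          (fun n => (Pplus n : ℝ) ≤ yk k)).card) + Psi (xk K) (yk K) := by
      unfold Dfun
      calc ((Finset.Icc 1 ⌊x⌋₊).filter (fun n => (Pplus n : ℝ) ≤ (n : ℝ) ^ (1 / u))).card
          ≤ (((Finset.Icc 1 (N K)).filter (fun n => (Pplus n : ℝ) ≤ yk K))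
              ∪ (Finset.range K).biUnion (fun k => (Finset.Ioc (N (k + 1)) (N k)).filter
                  (fun n => (Pplus n : ℝ) ≤ yk k))).card := Finset.card_le_card hDsub
        _ ≤ ((Finset.Icc 1 (N K)).filter (fun n => (Pplus n : ℝ) ≤ yk K)).card
              + ((Finset.range K).biUnion (fun k => (Finset.Ioc (N (k + 1)) (N k)).filter
                  (fun n => (Pplus n : ℝ) ≤ yk k))).card := Finset.card_union_le _ _
        _ ≤ ((Finset.Icc 1 (N K)).filter (fun n => (Pplus n : ℝ) ≤ yk K)).card
              + ∑ k ∈ Finset.range K, ((Finset.Ioc (N (k + 1)) (N k)).filter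
                  (fun n => (Pplus n : ℝ) ≤ yk k)).card :=
            Nat.add_le_add_left (Finset.card_biUnion_le) _
        _ = (∑ k ∈ Finset.range K, ((Finset.Ioc (N (k + 1)) (N k)).filter
                  (fun n => (Pplus n : ℝ) ≤ yk k)).card) + Psi (xk K) (yk K) := by
            unfold Psi
            rw [show ⌊xk K⌋₊ = N K from rfl]
            ring
    have : ((Dfun x u : ℕ) : ℝ) ≤ ((∑ k ∈ Finset.range K, ((Finset.Ioc (N (k + 1)) (N k)).filter
          (fun n => (Pplus n : ℝ) ≤ yk k)).card : ℕ) : ℝ) + ((Psi (xk K) (yk K) : ℕ) : ℝ) := by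
      exact_mod_cast hcard
    refine le_trans this ?_
    have : ((∑ k ∈ Finset.range K, ((Finset.Ioc (N (k + 1)) (N k)).filter
          (fun n => (Pplus n : ℝ) ≤ yk k)).card : ℕ) : ℝ)
        = ∑ k ∈ Finset.range K,
          ((Psi (xk k) (yk k) : ℝ) - (Psi (xk (k + 1)) (yk k) : ℝ)) := by
      push_cast
      exact (Finset.sum_congr rfl fun k _ => (hsplit k (yk k)).symm)
    rw [this]
end
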